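/- Under the stated hypotheses on μ, assume in addition that μ is strongly continuous on Y, i.e. for every y ∈ Y and every ε > 0 there is δ > 0 such that ‖μ_{s,t}y − y‖_Y ≤ ε whenever (s,t) ∈ Δ_T with t − s ≤ δ. Then the evolution system ψ obtained as the limit of the partition products is also strongly continuous: for every y ∈ Y and every ε > 0 there is δ > 0 such that ‖ψ_{s,t}y − y‖_Y ≤ ε whenever t − s ≤ δ. -/

import Mathlib

open Filter

structure TimePartition (s t : ℝ) where
  k : ℕ
  hk : 0 < k
  pts : ℕ → ℝ
  strict : ∀ i < k, pts i < pts (i + 1)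
  first : pts 0 = s
  last : pts k = t

noncomputable def TimePartition.mesh {s t : ℝ} (P : TimePartition s t) : ℝ :=
  (Finset.range P.k).sup' (Finset.nonempty_range_iff.mpr P.hk.ne') fun i => P.pts (i + 1) - P.pts i

noncomputable def prodOps {Z : Type*} [NormedAddCommGroup Z] [NormedSpace ℝ Z] {s t : ℝ}
    (μ : ℝ → ℝ → (Z →L[ℝ] Z)) (P : TimePartition s t) : Z →L[ℝ] Z :=
  ((List.range P.k).map fun i => μ (P.pts i) (P.pts (i + 1))).prod

/-- The real Riemann zeta function `ζ(z) = ∑_{n ≥ 1} n^{-z}`. -/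
noncomputable def zetaR (z : ℝ) : ℝ := ∑' n : ℕ, ((n : ℝ) + 1) ^ (-z)

namespace TimePartition

lemma pts_le {s t : ℝ} (P : TimePartition s t) {i j : ℕ} (hij : i ≤ j) (hj : j ≤ P.k) :
    P.pts i ≤ P.pts j := by
  induction j, hij using Nat.le_induction with
  | base => exact le_rfl
  | succ n hn ih =>
    exact le_trans (ih (by omega)) (P.strict n (by omega)).le

lemma pts_mem {s t : ℝ} (P : TimePartition s t) {i : ℕ} (hi : i ≤ P.k) :
    s ≤ P.pts i ∧ P.pts i ≤ t :=
  ⟨(le_of_eq P.first.symm).trans (P.pts_le (Nat.zero_le _) hi),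
    (P.pts_le hi le_rfl).trans (le_of_eq P.last)⟩

lemma s_lt_t {s t : ℝ} (P : TimePartition s t) : s < t := by
  have h1 := P.strict 0 P.hk
  have h2 := P.pts_le P.hk le_rfl
  rw [P.first] at h1
  rw [P.last] at h2
  linarith

def sub {s t : ℝ} (P : TimePartition s t) (a b : ℕ) (hab : a < b) (hb : b ≤ P.k) :
    TimePartition (P.pts a) (P.pts b) where
  k := b - a
  hk := by omega
  pts i := P.pts (a + min i (b - a))
  strict i hi := by
    show P.pts (a + min i (b - a)) < P.pts (a + min (i + 1) (b - a))
    have h1 : min i (b - a) = i := by omega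
    have h2 : min (i+1) (b - a) = i + 1 := by omega
    rw [h1, h2, ← Nat.add_assoc]
    exact P.strict (a + i) (by omega)
  first := by simp
  last := by
    show P.pts (a + min (b - a) (b - a)) = P.pts b
    rw [min_self]; congr 1; omega

@[simp] lemma sub_k {s t : ℝ} (P : TimePartition s t) (a b : ℕ) (hab : a < b) (hb : b ≤ P.k) :
    (P.sub a b hab hb).k = b - a := rfl

def remove {s t : ℝ} (P : TimePartition s t) (j : ℕ) (h1 : 1 ≤ j) (h2 : j < P.k) :
    TimePartition s t where
  k := P.k - 1
  hk := by omega
  pts i := if i < j then P.pts i else P.pts (i + 1)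
  strict i hi := by
    by_cases hij : i + 1 < j
    · simp only [if_pos hij, if_pos (show i < j by omega)]
      exact P.strict i (by omega)
    · by_cases hij2 : i < j
      · simp only [if_pos hij2, if_neg hij]
        exact lt_trans (P.strict i (by omega)) (P.strict (i+1) (by omega))
      · simp only [if_neg hij, if_neg hij2]
        exact P.strict (i+1) (by omega)
  first := by simp only [if_pos (show 0 < j by omega), P.first]
  last := by
    show (if P.k - 1 < j then P.pts (P.k-1) else P.pts (P.k - 1 + 1)) = t
    rw [if_neg (show ¬ (P.k - 1 < j) by omega), show P.k - 1 + 1 = P.k by omega, P.last]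

@[simp] lemma remove_k {s t : ℝ} (P : TimePartition s t) (j : ℕ) (h1 : 1 ≤ j)
    (h2 : j < P.k) : (P.remove j h1 h2).k = P.k - 1 := rfl

end TimePartition

section ListProd
variable {M : Type*} [Monoid M]

lemma listProd_split (f : ℕ → M) (a k : ℕ) (h : a ≤ k) :
    ((List.range k).map f).prod =
      ((List.range a).map f).prod * ((List.range (k - a)).map fun i => f (a + i)).prod := by
  conv_lhs => rw [show k = a + (k - a) by omega]
  rw [List.range_add, List.map_append, List.prod_append, List.map_map]
  rfl

lemma listProd_middle1 (f : ℕ → M) (a m : ℕ) :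
    ((List.range (a + 1 + m)).map f).prod =
      ((List.range a).map f).prod * f a *
        ((List.range m).map fun i => f (a + 1 + i)).prod := by
  rw [List.range_add (n := a+1) (m := m), List.range_succ, List.map_append, List.map_append,
    List.prod_append, List.prod_append, List.map_map]
  simp only [Function.comp_def, mul_assoc]
  simp

lemma listProd_middle2 (f : ℕ → M) (a m : ℕ) :
    ((List.range (a + 2 + m)).map f).prod =
      ((List.range a).map f).prod * (f a * f (a+1)) *
        ((List.range m).map fun i => f (a + 2 + i)).prod := by
  rw [show a + 2 + m = a + 1 + 1 + m by omega, listProd_middle1 f (a+1) m,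
    List.range_succ, List.map_append, List.prod_append]
  simp only [List.map_cons, List.map_nil, List.prod_cons, List.prod_nil, mul_one, mul_assoc,
    show a + 1 + 1 = a + 2 from rfl]

end ListProd

lemma prodOps_sub_eq {Z : Type*} [NormedAddCommGroup Z] [NormedSpace ℝ Z] {s t : ℝ}
    (μ : ℝ → ℝ → (Z →L[ℝ] Z)) (P : TimePartition s t) (a b : ℕ) (hab : a < b) (hb : b ≤ P.k) :
    prodOps μ (P.sub a b hab hb) =
      ((List.range (b - a)).map fun i => μ (P.pts (a + i)) (P.pts (a + i + 1))).prod := by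
  simp only [prodOps, TimePartition.sub]
  congr 1
  apply List.map_congr_left
  intro i hi
  rw [List.mem_range] at hi
  have h1 : min i (b - a) = i := by omega
  have h2 : min (i+1) (b - a) = i + 1 := by omega
  simp only [h1, h2]
  congr 2 <;> omega

lemma prod_comp_iota {X Y : Type*} [NormedAddCommGroup X] [NormedSpace ℝ X]
    [NormedAddCommGroup Y] [NormedSpace ℝ Y] (ι : X →L[ℝ] Y)
    (f : ℕ → (Y →L[ℝ] Y)) (g : ℕ → (X →L[ℝ] X)) (n : ℕ)
    (h : ∀ i < n, ∀ x, f i (ι x) = ι (g i x)) (x : X) :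
    (((List.range n).map f).prod) (ι x) = ι ((((List.range n).map g).prod) x) := by
  induction n generalizing x with
  | zero => simp
  | succ m ih =>
    rw [List.range_succ, List.map_append, List.prod_append, List.map_append, List.prod_append]
    simp only [List.map_cons, List.map_nil, List.prod_cons, List.prod_nil, mul_one,
      ContinuousLinearMap.mul_apply]
    rw [h m (by omega), ih (fun i hi => h i (by omega))]

lemma prodOps_remove {Z : Type*} [NormedAddCommGroup Z] [NormedSpace ℝ Z]
    (μ : ℝ → ℝ → (Z →L[ℝ] Z)) {s t : ℝ} (P : TimePartition s t) (a m : ℕ)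
    (hk : P.k = a + 2 + m) :
    prodOps μ P - prodOps μ (P.remove (a+1) (by omega) (by omega)) =
      ((List.range a).map fun i => μ (P.pts i) (P.pts (i+1))).prod *
        ((μ (P.pts a) (P.pts (a+1)) * μ (P.pts (a+1)) (P.pts (a+2))) -
          μ (P.pts a) (P.pts (a+2))) *
        ((List.range m).map fun i => μ (P.pts (a+2+i)) (P.pts (a+2+i+1))).prod := by
  unfold prodOps
  rw [show (P.remove (a+1) (by omega) (by omega)).k = a + 1 + m by simp [hk]]
  have hmain : ((List.range P.k).map fun i => μ (P.pts i) (P.pts (i+1))).prod =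
      ((List.range a).map fun i => μ (P.pts i) (P.pts (i+1))).prod *
        (μ (P.pts a) (P.pts (a+1)) * μ (P.pts (a+1)) (P.pts (a+2))) *
        ((List.range m).map fun i => μ (P.pts (a+2+i)) (P.pts (a+2+i+1))).prod := by
    rw [hk, listProd_middle2]
  rw [hmain, listProd_middle1]
  have e1 : ((List.range a).map fun i =>
      μ ((P.remove (a+1) (by omega) (by omega)).pts i)
        ((P.remove (a+1) (by omega) (by omega)).pts (i+1))).prod =
      ((List.range a).map fun i => μ (P.pts i) (P.pts (i+1))).prod := by
    congr 1
    apply List.map_congr_left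
    intro i hi
    rw [List.mem_range] at hi
    show μ (if i < a + 1 then _ else _) (if i + 1 < a + 1 then _ else _) = _
    rw [if_pos (by omega), if_pos (by omega)]
  have e2 : μ ((P.remove (a+1) (by omega) (by omega)).pts a)
      ((P.remove (a+1) (by omega) (by omega)).pts (a+1)) = μ (P.pts a) (P.pts (a+2)) := by
    show μ (if a < a + 1 then _ else _) (if a + 1 < a + 1 then _ else _) = _
    rw [if_pos (by omega), if_neg (by omega)]
  have e3 : ((List.range m).map fun i =>
      μ ((P.remove (a+1) (by omega) (by omega)).pts (a+1+i))
        ((P.remove (a+1) (by omega) (by omega)).pts (a+1+i+1))).prod =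
      ((List.range m).map fun i => μ (P.pts (a+2+i)) (P.pts (a+2+i+1))).prod := by
    congr 1
    apply List.map_congr_left
    intro i hi
    show μ (if a+1+i < a + 1 then _ else _) (if a+1+i+1 < a + 1 then _ else _) = _
    rw [if_neg (by omega), if_neg (by omega)]
    congr 2 <;> omega
  rw [e1, e2, e3, ← sub_mul, ← mul_sub]

noncomputable def unifPart (s t : ℝ) (h : s < t) (n : ℕ) : TimePartition s t where
  k := n + 1
  hk := Nat.succ_pos n
  pts i := s + (min i (n+1) : ℕ) * ((t - s) / (n+1))
  strict i hi := by
    show s + (min i (n+1) : ℕ) * ((t - s) / (n+1)) <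
      s + (min (i+1) (n+1) : ℕ) * ((t - s) / (n+1))
    rw [show min i (n+1) = i by omega, show min (i+1) (n+1) = i + 1 by omega]
    have hd : 0 < (t - s)/(n+1 : ℝ) := by
      apply div_pos (by linarith) (by positivity)
    have hii : (i : ℝ) < ((i+1 : ℕ) : ℝ) := by exact_mod_cast Nat.lt_succ_self i
    have := mul_lt_mul_of_pos_right hii hd
    linarith
  first := by simp
  last := by
    show s + (min (n+1) (n+1) : ℕ) * ((t - s) / (n+1)) = t
    rw [min_self]
    push_cast
    field_simp
    ring

@[simp] lemma unifPart_k (s t : ℝ) (h : s < t) (n : ℕ) : (unifPart s t h n).k = n + 1 := rfl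

lemma unifPart_mesh (s t : ℝ) (h : s < t) (n : ℕ) :
    (unifPart s t h n).mesh = (t - s)/(n+1) := by
  unfold TimePartition.mesh
  have hc : ∀ i ∈ Finset.range ((unifPart s t h n).k),
      (unifPart s t h n).pts (i+1) - (unifPart s t h n).pts i = (t-s)/(n+1) := by
    intro i hi
    rw [Finset.mem_range] at hi
    show (s + (min (i+1) (n+1) : ℕ) * ((t - s) / (n+1))) -
      (s + (min i (n+1) : ℕ) * ((t - s) / (n+1))) = _
    rw [show min (i+1) (n+1) = i+1 by simp at hi; omega, show min i (n+1) = i by simp at hi; omega]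
    push_cast
    ring
  rw [Finset.sup'_congr _ rfl hc, Finset.sup'_const]

theorem stmt4
    {X Y : Type*} [NormedAddCommGroup X] [NormedSpace ℝ X] [CompleteSpace X]
    [NormedAddCommGroup Y] [NormedSpace ℝ Y] [CompleteSpace Y]
    (T : ℝ) (hT : 0 < T)
    (ι : X →L[ℝ] Y) (hι_inj : Function.Injective ι) (hι_dense : DenseRange ι)
    (hι_norm : ∀ x : X, ‖ι x‖ ≤ ‖x‖)
    (μ : ℝ → ℝ → (Y →L[ℝ] Y)) (μX : ℝ → ℝ → (X →L[ℝ] X))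
    (hcompat : ∀ s t : ℝ, 0 ≤ s → s ≤ t → t ≤ T → ∀ x : X, μ s t (ι x) = ι (μX s t x))
    (hidY : ∀ s : ℝ, 0 ≤ s → s ≤ T → μ s s = 1)
    (hidX : ∀ s : ℝ, 0 ≤ s → s ≤ T → μX s s = 1)
    (ε₁ ε₂ : ℝ → ℝ → ℝ)
    (hε₁_cont : ContinuousOn (fun p : ℝ × ℝ => ε₁ p.1 p.2) {p | 0 ≤ p.1 ∧ p.1 ≤ p.2 ∧ p.2 ≤ T})
    (hε₂_cont : ContinuousOn (fun p : ℝ × ℝ => ε₂ p.1 p.2) {p | 0 ≤ p.1 ∧ p.1 ≤ p.2 ∧ p.2 ≤ T})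
    (hε₁_nonneg : ∀ s t : ℝ, 0 ≤ s → s ≤ t → t ≤ T → 0 ≤ ε₁ s t)
    (hε₂_nonneg : ∀ s t : ℝ, 0 ≤ s → s ≤ t → t ≤ T → 0 ≤ ε₂ s t)
    (hε₁_mono : ∀ s s' t t' : ℝ, 0 ≤ s → s ≤ s' → s' ≤ t → t ≤ t' → t' ≤ T → ε₁ s' t ≤ ε₁ s t')
    (hε₂_mono : ∀ s s' t t' : ℝ, 0 ≤ s → s ≤ s' → s' ≤ t → t ≤ t' → t' ≤ T → ε₂ s' t ≤ ε₂ s t')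
    (hboundX : ∀ s t : ℝ, 0 ≤ s → s ≤ t → t ≤ T → ∀ P : TimePartition s t, ‖prodOps μX P‖ ≤ ε₁ s t)
    (hboundY : ∀ s t : ℝ, 0 ≤ s → s ≤ t → t ≤ T → ∀ P : TimePartition s t, ‖prodOps μ P‖ ≤ ε₂ s t)
    (χ : ℝ → ℝ → ℝ)
    (hχ_cont : ContinuousOn (fun p : ℝ × ℝ => χ p.1 p.2) {p | 0 ≤ p.1 ∧ p.1 ≤ p.2 ∧ p.2 ≤ T})
    (hχ_nonneg : ∀ s t : ℝ, 0 ≤ s → s ≤ t → t ≤ T → 0 ≤ χ s t)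
    (hχ_diag : ∀ s : ℝ, 0 ≤ s → s ≤ T → χ s s = 0)
    (hχ_super : ∀ s u t : ℝ, 0 ≤ s → s ≤ u → u ≤ t → t ≤ T → χ s u + χ u t ≤ χ s t)
    (z : ℝ) (hz : 1 < z)
    (halmost : ∀ s u t : ℝ, 0 ≤ s → s ≤ u → u ≤ t → t ≤ T →
      ‖(μ s t - μ s u * μ u t).comp ι‖ ≤ χ s t ^ z)
    (ψ : ℝ → ℝ → (Y →L[ℝ] Y))
    (hψ_id : ∀ s : ℝ, 0 ≤ s → s ≤ T → ψ s s = 1)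
    (hψ_evol : ∀ s u t : ℝ, 0 ≤ s → s ≤ u → u ≤ t → t ≤ T → ψ s t = ψ s u * ψ u t)
    (hψ_limit : ∀ s t : ℝ, 0 ≤ s → s ≤ t → t ≤ T → ∀ π : ℕ → TimePartition s t,
      Tendsto (fun n => (π n).mesh) atTop (nhds 0) →
      Tendsto (fun n => ‖(ψ s t - prodOps μ (π n)).comp ι‖) atTop (nhds 0))
    (hμ_strong : ∀ y : Y, ∀ ε : ℝ, 0 < ε → ∃ δ : ℝ, 0 < δ ∧
      ∀ s t : ℝ, 0 ≤ s → s ≤ t → t ≤ T → t - s ≤ δ → ‖μ s t y - y‖ ≤ ε) :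
    ∀ y : Y, ∀ ε : ℝ, 0 < ε → ∃ δ : ℝ, 0 < δ ∧
      ∀ s t : ℝ, 0 ≤ s → s ≤ t → t ≤ T → t - s ≤ δ → ‖ψ s t y - y‖ ≤ ε := by
  classical
  set C₁ : ℝ := max 1 (ε₁ 0 T) with hC₁def
  set C₂ : ℝ := max 1 (ε₂ 0 T) with hC₂def
  have hC₁1 : (1:ℝ) ≤ C₁ := le_max_left _ _
  have hC₂1 : (1:ℝ) ≤ C₂ := le_max_left _ _
  have hC₁0 : (0:ℝ) < C₁ := lt_of_lt_of_le one_pos hC₁1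
  have hC₂0 : (0:ℝ) < C₂ := lt_of_lt_of_le one_pos hC₂1
  have hz0 : (0:ℝ) < z := lt_trans one_pos hz
  have hZ0 : 0 ≤ zetaR z := tsum_nonneg fun n => Real.rpow_nonneg (by positivity) _
  have hZsummable : Summable (fun n : ℕ => ((n:ℝ)+1)^(-z)) := by
    have h1 : Summable (fun n : ℕ => (n:ℝ)^(-z)) :=
      Real.summable_nat_rpow.mpr (by linarith)
    have h2 := (summable_nat_add_iff 1).mpr h1
    refine h2.congr fun n => ?_
    push_cast
    ring_nf
  -- mesh of uniform partitions tends to 0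
  have hmesh0 : ∀ s t : ℝ, (h : s < t) → Tendsto (fun n => (unifPart s t h n).mesh)
      atTop (nhds 0) := by
    intro s t h
    have h1 : Tendsto (fun n : ℕ => (t-s) * (1/((n:ℝ)+1))) atTop (nhds ((t-s) * 0)) :=
      tendsto_one_div_add_atTop_nhds_zero_nat.const_mul (t-s)
    rw [mul_zero] at h1
    refine h1.congr fun n => ?_
    rw [unifPart_mesh, mul_one_div]
  -- χ monotone
  have hχ_mono : ∀ s u t : ℝ, 0 ≤ s → s ≤ u → u ≤ t → t ≤ T → χ s u ≤ χ s t := by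
    intro s u t h1 h2 h3 h4
    have := hχ_super s u t h1 h2 h3 h4
    have := hχ_nonneg u t (by linarith) h3 h4
    linarith
  -- product compatibility through ι
  have hPcompat : ∀ s t : ℝ, 0 ≤ s → t ≤ T → ∀ P : TimePartition s t, ∀ x : X,
      prodOps μ P (ι x) = ι (prodOps μX P x) := by
    intro s t hs ht P x
    have hst : s ≤ t := P.s_lt_t.le
    apply prod_comp_iota
    intro i hi x
    have h1 := P.pts_mem (i := i) (by omega)
    have h2 := P.pts_mem (i := i+1) (by omega)
    exact hcompat _ _ (by linarith [h1.1]) (P.pts_le (by omega) (by omega))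
      (by linarith [h2.2]) x
  -- norm bounds on partition products
  have hPboundY : ∀ s t : ℝ, 0 ≤ s → t ≤ T → ∀ P : TimePartition s t,
      ‖prodOps μ P‖ ≤ C₂ := by
    intro s t hs ht P
    have hst : s ≤ t := P.s_lt_t.le
    refine le_trans (hboundY s t hs hst ht P) (le_trans ?_ (le_max_right 1 _))
    exact hε₂_mono 0 s t T le_rfl hs hst ht le_rfl
  have hPboundX : ∀ s t : ℝ, 0 ≤ s → t ≤ T → ∀ P : TimePartition s t,
      ‖prodOps μX P‖ ≤ C₁ := by
    intro s t hs ht P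
    have hst : s ≤ t := P.s_lt_t.le
    refine le_trans (hboundX s t hs hst ht P) (le_trans ?_ (le_max_right 1 _))
    exact hε₁_mono 0 s t T le_rfl hs hst ht le_rfl
  -- trivial partition: prodOps equals μ s t
  have htriv : ∀ s t : ℝ, (h : s < t) → prodOps μ (unifPart s t h 0) = μ s t := by
    intro s t h
    unfold prodOps
    rw [show (unifPart s t h 0).k = 1 from rfl]
    rw [List.range_succ, List.range_zero]
    simp only [List.nil_append, List.map_cons, List.map_nil, List.prod_cons, List.prod_nil,
      mul_one]
    congr 1
    · exact (unifPart s t h 0).first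
    · exact (unifPart s t h 0).last
  -- removal estimate
  have hremove : ∀ s t : ℝ, 0 ≤ s → t ≤ T → ∀ P : TimePartition s t, ∀ a m : ℕ,
      (hk : P.k = a + 2 + m) →
      ‖(prodOps μ P - prodOps μ (P.remove (a+1) (by omega) (by omega))).comp ι‖ ≤
        C₂ * C₁ * χ (P.pts a) (P.pts (a+2)) ^ z := by
    intro s t hs ht P a m hk
    have hst : s ≤ t := P.s_lt_t.le
    have hmem : ∀ i, i ≤ P.k → 0 ≤ P.pts i ∧ P.pts i ≤ T := by
      intro i hi
      have := P.pts_mem hi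
      exact ⟨by linarith [this.1], by linarith [this.2]⟩
    rw [prodOps_remove μ P a m hk]
    set A : Y →L[ℝ] Y := ((List.range a).map fun i => μ (P.pts i) (P.pts (i+1))).prod with hA
    set D : Y →L[ℝ] Y := (μ (P.pts a) (P.pts (a+1)) * μ (P.pts (a+1)) (P.pts (a+2))) -
      μ (P.pts a) (P.pts (a+2)) with hD
    set B : Y →L[ℝ] Y :=
      ((List.range m).map fun i => μ (P.pts (a+2+i)) (P.pts (a+2+i+1))).prod with hB
    set BX : X →L[ℝ] X :=
      ((List.range m).map fun i => μX (P.pts (a+2+i)) (P.pts (a+2+i+1))).prod with hBX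
    have hχa : 0 ≤ χ (P.pts a) (P.pts (a+2)) :=
      hχ_nonneg _ _ (hmem a (by omega)).1 (P.pts_le (by omega) (by omega)) (hmem (a+2) (by omega)).2
    have hχz : 0 ≤ χ (P.pts a) (P.pts (a+2)) ^ z := Real.rpow_nonneg hχa z
    have hBι : ∀ x, B (ι x) = ι (BX x) := by
      intro x
      apply prod_comp_iota
      intro i hi x
      exact hcompat _ _ (hmem (a+2+i) (by omega)).1 (P.pts_le (by omega) (by omega))
        (hmem (a+2+i+1) (by omega)).2 x
    have hrw : (A * D * B).comp ι = (A.comp (D.comp ι)).comp BX := by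
      ext x
      simp only [ContinuousLinearMap.comp_apply, ContinuousLinearMap.mul_apply]
      rw [hBι x]
    have hAbd : ‖A‖ ≤ C₂ := by
      rcases Nat.eq_zero_or_pos a with ha | ha
      · subst ha
        simp only [hA, List.range_zero, List.map_nil, List.prod_nil]
        rw [ContinuousLinearMap.one_def]
        exact le_trans ContinuousLinearMap.norm_id_le hC₂1
      · have hb := hPboundY (P.pts 0) (P.pts a) (by rw [P.first]; exact hs)
          (hmem a (by omega)).2 (P.sub 0 a ha (by omega))
        rw [prodOps_sub_eq] at hb
        simpa using hb
    have hDbd : ‖D.comp ι‖ ≤ χ (P.pts a) (P.pts (a+2)) ^ z := by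
      have : D = -(μ (P.pts a) (P.pts (a+2)) -
          μ (P.pts a) (P.pts (a+1)) * μ (P.pts (a+1)) (P.pts (a+2))) := by
        rw [neg_sub]
      rw [this, ContinuousLinearMap.neg_comp, norm_neg]
      exact halmost _ _ _ (hmem a (by omega)).1 (P.pts_le (by omega) (by omega))
        (P.pts_le (by omega) (by omega)) (hmem (a+2) (by omega)).2
    have hBXbd : ‖BX‖ ≤ C₁ := by
      rcases Nat.eq_zero_or_pos m with hm | hm
      · subst hm
        simp only [hBX, List.range_zero, List.map_nil, List.prod_nil]
        rw [ContinuousLinearMap.one_def]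
        exact le_trans ContinuousLinearMap.norm_id_le hC₁1
      · have hb := hPboundX (P.pts (a+2)) (P.pts P.k) (hmem (a+2) (by omega)).1
          (by rw [P.last]; exact ht) (P.sub (a+2) P.k (by omega) le_rfl)
        rw [prodOps_sub_eq, show P.k - (a+2) = m by omega] at hb
        exact hb
    rw [hrw]
    calc ‖(A.comp (D.comp ι)).comp BX‖ ≤ ‖A.comp (D.comp ι)‖ * ‖BX‖ :=
        ContinuousLinearMap.opNorm_comp_le _ _
      _ ≤ (‖A‖ * ‖D.comp ι‖) * ‖BX‖ := by
          apply mul_le_mul_of_nonneg_right (ContinuousLinearMap.opNorm_comp_le _ _)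
            (norm_nonneg _)
      _ ≤ (C₂ * (χ (P.pts a) (P.pts (a+2)) ^ z)) * C₁ := by
          apply mul_le_mul _ hBXbd (norm_nonneg _) (by positivity)
          exact mul_le_mul hAbd hDbd (norm_nonneg _) (by positivity)
      _ = C₂ * C₁ * χ (P.pts a) (P.pts (a+2)) ^ z := by ring
  -- sum of overlapping χ's
  have hsum : ∀ s t : ℝ, 0 ≤ s → t ≤ T → ∀ P : TimePartition s t,
      ∑ j ∈ Finset.range (P.k - 1), χ (P.pts j) (P.pts (j+2)) ≤ 2 * χ s t := by
    intro s t hs ht P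
    have hst : s ≤ t := P.s_lt_t.le
    set g : ℕ → ℝ := fun i => χ s (P.pts (min i P.k)) with hg
    have hgmem : ∀ i, 0 ≤ P.pts (min i P.k) ∧ P.pts (min i P.k) ≤ T := by
      intro i
      have := P.pts_mem (i := min i P.k) (by omega)
      exact ⟨by linarith [this.1], by linarith [this.2]⟩
    have hgnonneg : ∀ i, 0 ≤ g i := by
      intro i
      exact hχ_nonneg _ _ hs ((P.pts_mem (i := min i P.k) (by omega)).1) (hgmem i).2
    have hgmono : ∀ i j, i ≤ j → g i ≤ g j := by
      intro i j hij
      have h1 : P.pts (min i P.k) ≤ P.pts (min j P.k) := P.pts_le (by omega) (by omega)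
      have h2 := (P.pts_mem (i := min i P.k) (by omega)).1
      have := hχ_super s (P.pts (min i P.k)) (P.pts (min j P.k)) hs h2 h1 (hgmem j).2
      have := hχ_nonneg (P.pts (min i P.k)) (P.pts (min j P.k)) (by linarith [h2]) h1 (hgmem j).2
      simp only [hg]
      linarith
    have hterm : ∀ j ∈ Finset.range (P.k - 1),
        χ (P.pts j) (P.pts (j+2)) ≤ (g (j+2) - g (j+1)) + (g (j+1) - g j) := by
      intro j hj
      rw [Finset.mem_range] at hj
      have hj2 : j + 2 ≤ P.k := by omega
      have e0 : min j P.k = j := by omega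
      have e2 : min (j+2) P.k = j + 2 := by omega
      have hq1 := (P.pts_mem (i := j) (by omega)).1
      have hq2 : P.pts j ≤ P.pts (j+2) := P.pts_le (by omega) hj2
      have hq3 := (P.pts_mem (i := j+2) hj2).2
      have := hχ_super s (P.pts j) (P.pts (j+2)) hs (by linarith) hq2 (by linarith)
      simp only [hg, e0, e2]
      linarith
    refine le_trans (Finset.sum_le_sum hterm) ?_
    rw [Finset.sum_add_distrib, Finset.sum_range_sub (fun j => g (j+1)),
      Finset.sum_range_sub g]
    have hg0 : g (P.k - 1 + 1) = χ s t := by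
      simp only [hg, show min (P.k - 1 + 1) P.k = P.k by omega, P.last]
    have hg1 : g (P.k - 1) ≤ χ s t := by
      have := hgmono (P.k - 1) (P.k - 1 + 1) (by omega)
      rw [hg0] at this
      exact this
    have := hgnonneg 0
    have := hgnonneg (P.k - 1 + 1)
    rw [hg0]
    linarith [hgnonneg (P.k - 1), hgnonneg 1, hg1]
  -- key sewing estimate for partition products
  have key : ∀ n : ℕ, ∀ s t : ℝ, 0 ≤ s → t ≤ T → ∀ P : TimePartition s t, P.k = n →
      ‖(prodOps μ P - μ s t).comp ι‖ ≤
        C₂ * C₁ * ∑ j ∈ Finset.range (n-1), (2 * χ s t / (j+1)) ^ z := by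
    intro n
    induction n with
    | zero =>
      intro s t hs ht P hP
      exact absurd hP (by have := P.hk; omega)
    | succ N ih =>
      intro s t hs ht P hP
      have hst : s ≤ t := P.s_lt_t.le
      have hχst : 0 ≤ χ s t := hχ_nonneg s t hs hst ht
      rcases Nat.eq_zero_or_pos N with hN | hN
      · subst hN
        have h1 : prodOps μ P = μ s t := by
          unfold prodOps
          rw [hP, List.range_succ, List.range_zero]
          simp only [List.nil_append, List.map_cons, List.map_nil, List.prod_cons,
            List.prod_nil, mul_one]
          have e1 : P.pts 1 = t := by
            conv_rhs => rw [← P.last]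
            congr 1
            omega
          rw [P.first, e1]
        rw [h1, sub_self, ContinuousLinearMap.zero_comp, norm_zero]
        simp
      · have hsumP := hsum s t hs ht P
        rw [hP] at hsumP
        simp only [Nat.add_sub_cancel] at hsumP
        obtain ⟨j, hjmem, hjle⟩ : ∃ j ∈ Finset.range N,
            χ (P.pts j) (P.pts (j+2)) ≤ 2 * χ s t / N := by
          by_contra hcon
          push_neg at hcon
          have hlt : ∑ j ∈ Finset.range N, (2 * χ s t / N) <
              ∑ j ∈ Finset.range N, χ (P.pts j) (P.pts (j+2)) :=
            Finset.sum_lt_sum_of_nonempty (Finset.nonempty_range_iff.mpr hN.ne')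
              fun j hj => hcon j hj
          rw [Finset.sum_const, Finset.card_range, nsmul_eq_mul] at hlt
          have hNne : (N:ℝ) ≠ 0 := Nat.cast_ne_zero.mpr hN.ne'
          have heq : (N:ℝ) * (2 * χ s t / N) = 2 * χ s t := by field_simp
          rw [heq] at hlt
          linarith
        rw [Finset.mem_range] at hjmem
        have hjk : j + 1 < P.k := by omega
        have hj1 : 1 ≤ j + 1 := by omega
        have hrem := hremove s t hs ht P j (N - 1 - j) (by omega)
        have hP'k : (P.remove (j+1) (by omega) (by omega)).k = N := by
          rw [TimePartition.remove_k, hP]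
          omega
        have hih := ih s t hs ht (P.remove (j+1) (by omega) (by omega)) hP'k
        have htri : ‖(prodOps μ P - μ s t).comp ι‖ ≤
            ‖(prodOps μ P - prodOps μ (P.remove (j+1) (by omega) (by omega))).comp ι‖ +
            ‖(prodOps μ (P.remove (j+1) (by omega) (by omega)) - μ s t).comp ι‖ := by
          have he : (prodOps μ P - μ s t).comp ι =
              (prodOps μ P - prodOps μ (P.remove (j+1) (by omega) (by omega))).comp ι +
              (prodOps μ (P.remove (j+1) (by omega) (by omega)) - μ s t).comp ι := by
            rw [← ContinuousLinearMap.add_comp]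
            congr 1
            abel
          rw [he]
          exact norm_add_le _ _
        have hmemj : 0 ≤ P.pts j ∧ P.pts j ≤ T := by
          have := P.pts_mem (i := j) (by omega)
          exact ⟨by linarith [this.1], by linarith [this.2]⟩
        have hmemj2 : P.pts (j+2) ≤ T := by
          have := P.pts_mem (i := j+2) (by omega)
          linarith [this.2]
        have hχj : 0 ≤ χ (P.pts j) (P.pts (j+2)) :=
          hχ_nonneg _ _ hmemj.1 (P.pts_le (by omega) (by omega)) hmemj2
        have hpow : χ (P.pts j) (P.pts (j+2)) ^ z ≤ (2 * χ s t / N) ^ z :=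
          Real.rpow_le_rpow hχj hjle hz0.le
        have hsplit : ∑ j ∈ Finset.range ((N+1)-1), (2 * χ s t / (j+1)) ^ z =
            ∑ j ∈ Finset.range (N-1), (2 * χ s t / (j+1)) ^ z + (2 * χ s t / N) ^ z := by
          have h1 : ((N - 1 : ℕ) : ℝ) + 1 = (N : ℝ) := by
            rw [show ((N-1:ℕ):ℝ) + 1 = ((N-1+1 : ℕ) : ℝ) by push_cast; ring,
              show N-1+1 = N by omega]
          rw [Nat.add_sub_cancel]
          conv_lhs => rw [show Finset.range N = Finset.range ((N-1)+1) from by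
            rw [show (N-1)+1 = N by omega]]
          rw [Finset.sum_range_succ, h1]
        rw [hsplit, mul_add]
        have := mul_le_mul_of_nonneg_left hpow (by positivity : (0:ℝ) ≤ C₂ * C₁)
        linarith
  -- sewing estimate for ψ
  have hψμ : ∀ s t : ℝ, 0 ≤ s → s < t → t ≤ T →
      ‖(ψ s t - μ s t).comp ι‖ ≤ C₂ * C₁ * ((2 * χ s t) ^ z * zetaR z) := by
    intro s t hs hlt ht
    have hχst : 0 ≤ χ s t := hχ_nonneg s t hs hlt.le ht
    have hχ2 : (0:ℝ) ≤ 2 * χ s t := by linarith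
    have hconv := hψ_limit s t hs hlt.le ht (unifPart s t hlt) (hmesh0 s t hlt)
    have hsumle : ∀ n : ℕ, ∑ j ∈ Finset.range n, (2 * χ s t / (j+1)) ^ z ≤
        (2 * χ s t) ^ z * zetaR z := by
      intro n
      have hterm : ∀ j : ℕ, (2 * χ s t / ((j:ℝ)+1)) ^ z =
          (2 * χ s t) ^ z * ((j:ℝ)+1) ^ (-z) := by
        intro j
        rw [Real.div_rpow hχ2 (by positivity), Real.rpow_neg (by positivity), div_eq_mul_inv]
      calc ∑ j ∈ Finset.range n, (2 * χ s t / ((j:ℝ)+1)) ^ z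
          = (2 * χ s t) ^ z * ∑ j ∈ Finset.range n, ((j:ℝ)+1) ^ (-z) := by
            rw [Finset.mul_sum]
            exact Finset.sum_congr rfl fun j _ => hterm j
        _ ≤ (2 * χ s t) ^ z * zetaR z := by
            apply mul_le_mul_of_nonneg_left _ (Real.rpow_nonneg hχ2 z)
            exact hZsummable.sum_le_tsum (Finset.range n)
              (fun i _ => Real.rpow_nonneg (by positivity) _)
    have hbd : ∀ n : ℕ, ‖(ψ s t - μ s t).comp ι‖ - C₂ * C₁ * ((2 * χ s t) ^ z * zetaR z) ≤
        ‖(ψ s t - prodOps μ (unifPart s t hlt n)).comp ι‖ := by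
      intro n
      have h1 := key ((unifPart s t hlt n).k) s t hs ht (unifPart s t hlt n) rfl
      have h2 : ‖(prodOps μ (unifPart s t hlt n) - μ s t).comp ι‖ ≤
          C₂ * C₁ * ((2 * χ s t) ^ z * zetaR z) := by
        refine le_trans h1 ?_
        exact mul_le_mul_of_nonneg_left (hsumle _) (by positivity)
      have h3 : ‖(ψ s t - μ s t).comp ι‖ ≤
          ‖(ψ s t - prodOps μ (unifPart s t hlt n)).comp ι‖ +
          ‖(prodOps μ (unifPart s t hlt n) - μ s t).comp ι‖ := by
        have he : (ψ s t - μ s t).comp ι =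
            (ψ s t - prodOps μ (unifPart s t hlt n)).comp ι +
            (prodOps μ (unifPart s t hlt n) - μ s t).comp ι := by
          rw [← ContinuousLinearMap.add_comp]
          congr 1
          abel
        rw [he]
        exact norm_add_le _ _
      linarith
    have := ge_of_tendsto' hconv hbd
    linarith
  -- norm bound for ψ
  have hψnorm : ∀ s t : ℝ, 0 ≤ s → s ≤ t → t ≤ T → ∀ y : Y, ‖ψ s t y‖ ≤ C₂ * ‖y‖ := by
    intro s t hs hst ht y
    rcases eq_or_lt_of_le hst with heq | hlt
    · rw [← heq, hψ_id s hs (heq ▸ ht)]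
      simp only [ContinuousLinearMap.one_apply]
      exact le_mul_of_one_le_left (norm_nonneg y) hC₂1
    · have hι_bound : ∀ x : X, ‖ψ s t (ι x)‖ ≤ C₂ * ‖ι x‖ := by
        intro x
        have hconv := hψ_limit s t hs hst ht (unifPart s t hlt) (hmesh0 s t hlt)
        have hbd : ∀ n : ℕ, ‖ψ s t (ι x)‖ - C₂ * ‖ι x‖ ≤
            ‖(ψ s t - prodOps μ (unifPart s t hlt n)).comp ι‖ * ‖x‖ := by
          intro n
          have h1 : ‖ψ s t (ι x) - prodOps μ (unifPart s t hlt n) (ι x)‖ ≤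
              ‖(ψ s t - prodOps μ (unifPart s t hlt n)).comp ι‖ * ‖x‖ := by
            have he : ψ s t (ι x) - prodOps μ (unifPart s t hlt n) (ι x) =
                ((ψ s t - prodOps μ (unifPart s t hlt n)).comp ι) x := by
              simp [ContinuousLinearMap.comp_apply, ContinuousLinearMap.sub_apply]
            rw [he]
            exact ContinuousLinearMap.le_opNorm _ _
          have h2 : ‖prodOps μ (unifPart s t hlt n) (ι x)‖ ≤ C₂ * ‖ι x‖ :=
            le_trans (ContinuousLinearMap.le_opNorm _ _)
              (mul_le_mul_of_nonneg_right (hPboundY s t hs ht _) (norm_nonneg _))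
          have h3 : ‖ψ s t (ι x)‖ ≤
              ‖ψ s t (ι x) - prodOps μ (unifPart s t hlt n) (ι x)‖ +
              ‖prodOps μ (unifPart s t hlt n) (ι x)‖ := by
            have := norm_add_le (ψ s t (ι x) - prodOps μ (unifPart s t hlt n) (ι x))
              (prodOps μ (unifPart s t hlt n) (ι x))
            rw [sub_add_cancel] at this
            exact this
          linarith
        have htend : Tendsto (fun n =>
            ‖(ψ s t - prodOps μ (unifPart s t hlt n)).comp ι‖ * ‖x‖) atTop (nhds 0) := by
          have := hconv.mul_const ‖x‖
          rwa [zero_mul] at this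
        have := ge_of_tendsto' htend hbd
        linarith
      have hclosed : IsClosed {w : Y | ‖ψ s t w‖ ≤ C₂ * ‖w‖} :=
        isClosed_le ((ψ s t).continuous.norm) (continuous_const.mul continuous_norm)
      have hsubset : Set.range ι ⊆ {w : Y | ‖ψ s t w‖ ≤ C₂ * ‖w‖} := by
        rintro _ ⟨x, rfl⟩
        exact hι_bound x
      have hcl : closure (Set.range ι) ⊆ {w : Y | ‖ψ s t w‖ ≤ C₂ * ‖w‖} :=
        closure_minimal hsubset hclosed
      have hy : y ∈ closure (Set.range ι) := by
        rw [hι_dense.closure_range]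
        trivial
      exact hcl hy
  -- χ is small when t - s is small
  have hχsmall : ∀ c : ℝ, 0 < c → ∃ δ : ℝ, 0 < δ ∧
      ∀ s t : ℝ, 0 ≤ s → s ≤ t → t ≤ T → t - s ≤ δ → χ s t ≤ c := by
    intro c hc
    set K : Set (ℝ × ℝ) := {p | 0 ≤ p.1 ∧ p.1 ≤ p.2 ∧ p.2 ≤ T} with hK
    have hKclosed : IsClosed K := by
      apply IsClosed.inter
      · exact isClosed_le continuous_const continuous_fst
      · exact IsClosed.inter (isClosed_le continuous_fst continuous_snd)
          (isClosed_le continuous_snd continuous_const)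
    have hKcompact : IsCompact K := by
      apply (isCompact_Icc (a := ((0:ℝ),(0:ℝ))) (b := (T,T))).of_isClosed_subset hKclosed
      intro p hp
      simp only [Set.mem_Icc, Prod.le_def]
      obtain ⟨h1, h2, h3⟩ := hp
      exact ⟨⟨h1, by linarith⟩, ⟨by linarith, h3⟩⟩
    have huc := hKcompact.uniformContinuousOn_of_continuous hχ_cont
    rw [Metric.uniformContinuousOn_iff] at huc
    obtain ⟨δ, hδ, hδ'⟩ := huc c hc
    refine ⟨δ/2, by linarith, ?_⟩
    intro s t hs hst ht hd
    have hmem1 : (s, t) ∈ K := ⟨hs, hst, ht⟩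
    have hmem2 : (s, s) ∈ K := ⟨hs, le_rfl, by linarith⟩
    have hdist : dist (s, t) (s, s) < δ := by
      rw [Prod.dist_eq]
      simp only [dist_self]
      rw [Real.dist_eq, abs_of_nonneg (by linarith : (0:ℝ) ≤ t - s),
        max_eq_right (by linarith : (0:ℝ) ≤ t - s)]
      linarith
    have := hδ' (s, t) hmem1 (s, s) hmem2 hdist
    rw [Real.dist_eq] at this
    have hd0 := hχ_diag s hs (by linarith)
    rw [hd0, sub_zero] at this
    exact le_trans (le_abs_self _) this.le
  -- final assembly
  intro y ε hε
  have hη : (0:ℝ) < ε/(4*(C₂+1)) := by positivity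
  obtain ⟨x, hx⟩ : ∃ x : X, ‖y - ι x‖ < ε/(4*(C₂+1)) := by
    obtain ⟨x, hx⟩ := Metric.denseRange_iff.mp hι_dense y (ε/(4*(C₂+1))) hη
    exact ⟨x, by rwa [dist_eq_norm] at hx⟩
  obtain ⟨δ₁, hδ₁, hδ₁'⟩ := hμ_strong (ι x) (ε/4) (by positivity)
  set K0 : ℝ := C₂ * C₁ * zetaR z * ‖x‖ + 1 with hK0
  have hK0pos : 0 < K0 := by positivity
  set r : ℝ := ε/(4*K0) with hr
  have hrpos : 0 < r := by positivity
  have hrz : (0:ℝ) < r^(1/z) := Real.rpow_pos_of_pos hrpos _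
  set c : ℝ := r^(1/z)/2 with hc
  have hcpos : 0 < c := by positivity
  obtain ⟨δ₂, hδ₂, hδ₂'⟩ := hχsmall c hcpos
  refine ⟨min δ₁ δ₂, lt_min hδ₁ hδ₂, ?_⟩
  intro s t hs hst ht hd
  rcases eq_or_lt_of_le hst with heq | hlt
  · rw [← heq, hψ_id s hs (heq ▸ ht)]
    simp only [ContinuousLinearMap.one_apply, sub_self, norm_zero]
    exact hε.le
  · have hχle : χ s t ≤ c := hδ₂' s t hs hst ht (le_trans hd (min_le_right _ _))
    have hχst : 0 ≤ χ s t := hχ_nonneg s t hs hst ht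
    have hterm2 : ‖ψ s t (ι x) - μ s t (ι x)‖ ≤ ε/4 := by
      have h1 : ‖ψ s t (ι x) - μ s t (ι x)‖ ≤ ‖(ψ s t - μ s t).comp ι‖ * ‖x‖ := by
        have he : ψ s t (ι x) - μ s t (ι x) = ((ψ s t - μ s t).comp ι) x := by
          simp [ContinuousLinearMap.comp_apply, ContinuousLinearMap.sub_apply]
        rw [he]
        exact ContinuousLinearMap.le_opNorm _ _
      have h2 := hψμ s t hs hlt ht
      have h3 : (2 * χ s t)^z ≤ r := by
        have ha : (2 * χ s t) ≤ 2 * c := by linarith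
        have hb : (2*χ s t)^z ≤ (2*c)^z :=
          Real.rpow_le_rpow (by positivity) ha hz0.le
        have h2c : 2 * c = r^(1/z) := by rw [hc]; ring
        have hcc : (2*c)^z = r := by
          rw [h2c, ← Real.rpow_mul hrpos.le, one_div_mul_cancel (ne_of_gt hz0),
            Real.rpow_one]
        linarith
      calc ‖ψ s t (ι x) - μ s t (ι x)‖ ≤ ‖(ψ s t - μ s t).comp ι‖ * ‖x‖ := h1
        _ ≤ (C₂ * C₁ * ((2*χ s t)^z * zetaR z)) * ‖x‖ :=
            mul_le_mul_of_nonneg_right h2 (norm_nonneg x)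
        _ = (C₂ * C₁ * zetaR z * ‖x‖) * (2*χ s t)^z := by ring
        _ ≤ (C₂ * C₁ * zetaR z * ‖x‖) * r :=
            mul_le_mul_of_nonneg_left h3 (by positivity)
        _ ≤ K0 * r := mul_le_mul_of_nonneg_right (by rw [hK0]; linarith) hrpos.le
        _ = ε/4 := by rw [hr]; field_simp
    have hterm3 : ‖μ s t (ι x) - ι x‖ ≤ ε/4 :=
      hδ₁' s t hs hst ht (le_trans hd (min_le_left _ _))
    have hterm1 : ‖ψ s t (y - ι x)‖ ≤ C₂ * ‖y - ι x‖ := hψnorm s t hs hst ht _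
    have hdecomp : ψ s t y - y = ψ s t (y - ι x) + (ψ s t (ι x) - μ s t (ι x)) +
        (μ s t (ι x) - ι x) + (ι x - y) := by
      rw [map_sub]
      abel
    rw [hdecomp]
    refine le_trans (norm_add_le _ _) ?_
    refine le_trans (add_le_add (norm_add_le _ _) le_rfl) ?_
    refine le_trans (add_le_add (add_le_add (norm_add_le _ _) le_rfl) le_rfl) ?_
    have hyx : ‖y - ι x‖ ≤ ε/(4*(C₂+1)) := hx.le
    have h4 : ‖ι x - y‖ ≤ ε/(4*(C₂+1)) := by rw [norm_sub_rev]; exact hyx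
    have hC2m : C₂ * ‖y - ι x‖ ≤ C₂ * (ε/(4*(C₂+1))) :=
      mul_le_mul_of_nonneg_left hyx hC₂0.le
    have hne : C₂ + 1 ≠ 0 := by positivity
    have heq2 : C₂ * (ε/(4*(C₂+1))) + ε/(4*(C₂+1)) = ε/4 := by
      have e1 : C₂ * (ε/(4*(C₂+1))) + ε/(4*(C₂+1)) = ((C₂+1) * ε)/((C₂+1)*4) := by ring
      rw [e1, mul_div_mul_left _ _ hne]
    linarith [hterm1, hterm2, hterm3, hC2m, h4, heq2, hε.le]
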